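/- Any set of pairwise unbiased unit weighing matrices of order 3 and weight 3 has at most 3 elements, and this bound is attained: there exist 3 pairwise unbiased unit Hadamard matrices of order 3 with entries third roots of unity. -/

import Mathlib

/-!
For the bound, adjoin the scaled identity `√n • 1` to the family: the `M = m + 1` matrices are
then pairwise unbiased complex Hadamard matrices. For each row `v` of one of them put
`Q v = v v* - 1`; it is traceless, and `tr (Q v * Q w) = |⟨v, w⟩|² - n` vanishes for rows of
different matrices and equals `n² δ - n` for rows of the same one. Hence the `Q v` for the first
`n - 1` rows of every matrix are linearly independent in the `(n² - 1)`-dimensional space of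
traceless matrices, so `M (n - 1) ≤ n² - 1`, i.e. `M ≤ n + 1`.

For the construction, over a finite field `F` of odd characteristic with a primitive additive
character `ψ`, the matrices `(ψ (t j² + i j))ᵢⱼ`, `t ∈ F`, are pairwise unbiased: the entries of
their products are quadratic Gauss sums, whose squared modulus is `|F|`.
-/

open Matrix

def IsUnitWeighing {n : ℕ} (w : ℕ) (W : Matrix (Fin n) (Fin n) ℂ) : Prop :=
  (∀ i j, W i j = 0 ∨ ‖W i j‖ = 1) ∧ W * Wᴴ = (w : ℂ) • 1

def Unbiased {n : ℕ} (w : ℕ) (H K : Matrix (Fin n) (Fin n) ℂ) : Prop :=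
  ∃ L, IsUnitWeighing w L ∧ H * Kᴴ = (Real.sqrt w : ℂ) • L

lemma Matrix.mul_conjTranspose_apply {m n : Type*} [Fintype n] (A B : Matrix m n ℂ) (i j : m) :
    (A * Bᴴ) i j = A i ⬝ᵥ star (B j) := rfl

lemma Matrix.mul_conjTranspose_self_apply_self {m n : Type*} [Fintype n] (A : Matrix m n ℂ)
    (i : m) : (A * Aᴴ) i i = ((∑ j, ‖A i j‖ ^ 2 : ℝ) : ℂ) := by
  simp [Matrix.mul_apply, Complex.mul_conj']

lemma Matrix.mul_eq_smul_one_comm {n 𝕜 : Type*} [Fintype n] [DecidableEq n] [Field 𝕜]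
    {A B : Matrix n n 𝕜} {c : 𝕜} (hc : c ≠ 0) (h : A * B = c • 1) : B * A = c • 1 := by
  have hinv : A * (c⁻¹ • B) = 1 := by
    rw [Matrix.mul_smul, h, smul_smul, inv_mul_cancel₀ hc, one_smul]
  calc B * A = c • ((c⁻¹ • B) * A) := by
        rw [Matrix.smul_mul, smul_smul, mul_inv_cancel₀ hc, one_smul]
    _ = c • 1 := by rw [mul_eq_one_comm.mp hinv]

lemma dotProduct_star_rows_eq {n : ℕ} {H : Matrix (Fin n) (Fin n) ℂ} (hH : H * Hᴴ = (n : ℂ) • 1)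
    (a b : Fin n) : H a ⬝ᵥ star (H b) = if a = b then (n : ℂ) else 0 := by
  rw [← mul_conjTranspose_apply, hH, Matrix.smul_apply, one_apply, smul_eq_mul, mul_ite, mul_one,
    mul_zero]

lemma IsUnitWeighing.norm_apply_eq_one {n : ℕ} {W : Matrix (Fin n) (Fin n) ℂ}
    (hW : IsUnitWeighing n W) (i j : Fin n) : ‖W i j‖ = 1 := by
  have hrow : ∑ j, ‖W i j‖ ^ 2 = (n : ℝ) := by
    have := congrFun (congrFun hW.2 i) i
    rw [Matrix.mul_conjTranspose_self_apply_self] at this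
    simp only [Matrix.smul_apply, one_apply_eq, smul_eq_mul, mul_one] at this
    exact_mod_cast this
  have hle : ∀ j, ‖W i j‖ ^ 2 ≤ 1 := fun j => by rcases hW.1 i j with h | h <;> simp [h]
  have hgap : ∑ j, (1 - ‖W i j‖ ^ 2) = 0 := by simp [Finset.sum_sub_distrib, hrow]
  have := (Finset.sum_eq_zero_iff_of_nonneg fun j _ => sub_nonneg.mpr (hle j)).mp hgap j
    (Finset.mem_univ j)
  nlinarith [norm_nonneg (W i j)]

lemma Unbiased.norm_sq_apply {n : ℕ} {H K : Matrix (Fin n) (Fin n) ℂ} (h : Unbiased n H K)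
    (a b : Fin n) : ‖(H * Kᴴ) a b‖ ^ 2 = n := by
  obtain ⟨L, hL, hHK⟩ := h
  rw [hHK, Matrix.smul_apply, smul_eq_mul, norm_mul, hL.norm_apply_eq_one, mul_one,
    Complex.norm_real, Real.norm_of_nonneg (Real.sqrt_nonneg _), Real.sq_sqrt (Nat.cast_nonneg _)]

lemma unbiased_of_norm_sq_apply {n : ℕ} {H K : Matrix (Fin n) (Fin n) ℂ}
    (hH : H * Hᴴ = (n : ℂ) • 1) (hK : K * Kᴴ = (n : ℂ) • 1)
    (h : ∀ a b, ‖(H * Kᴴ) a b‖ ^ 2 = n) : Unbiased n H K := by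
  rcases n.eq_zero_or_pos with rfl | hn
  · exact ⟨0, ⟨fun i => i.elim0, Subsingleton.elim _ _⟩, Subsingleton.elim _ _⟩
  set s : ℂ := (Real.sqrt n : ℂ)
  have hs : s ≠ 0 := Complex.ofReal_ne_zero.mpr (by positivity)
  have hs2 : s * s = n := by
    rw [← Complex.ofReal_mul, Real.mul_self_sqrt (Nat.cast_nonneg _), Complex.ofReal_natCast]
  refine ⟨s⁻¹ • (H * Kᴴ), ⟨fun a b => Or.inr ?_, ?_⟩, ?_⟩
  · rw [Matrix.smul_apply, smul_eq_mul, norm_mul, norm_inv, Complex.norm_real,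
      Real.norm_of_nonneg (Real.sqrt_nonneg _), ← Real.sqrt_sq (norm_nonneg _), h,
      inv_mul_cancel₀ (by positivity)]
  · have hKK : Kᴴ * K = (n : ℂ) • 1 := mul_eq_smul_one_comm (by exact_mod_cast hn.ne') hK
    have hss : star s⁻¹ = s⁻¹ := by simp [s, Complex.conj_ofReal]
    calc s⁻¹ • (H * Kᴴ) * (s⁻¹ • (H * Kᴴ))ᴴ = (s⁻¹ * s⁻¹) • (H * (Kᴴ * K) * Hᴴ) := by
          simp only [conjTranspose_smul, conjTranspose_mul, conjTranspose_conjTranspose, hss,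
            Matrix.smul_mul, Matrix.mul_smul, smul_smul, Matrix.mul_assoc]
      _ = (n : ℂ) • 1 := by
          rw [hKK, Matrix.mul_smul, Matrix.mul_one, Matrix.smul_mul, hH, smul_smul, smul_smul,
            ← hs2]
          field_simp
  · rw [smul_smul, mul_inv_cancel₀ hs, one_smul]

section MutuallyUnbiased

variable {n M : ℕ}

def centeredProj (v : Fin n → ℂ) : Matrix (Fin n) (Fin n) ℂ := vecMulVec v (star v) - 1

lemma trace_centeredProj (v : Fin n → ℂ) : trace (centeredProj v) = v ⬝ᵥ star v - n := by
  simp [centeredProj, trace_sub]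

lemma trace_centeredProj_mul {v w : Fin n → ℂ} (hv : v ⬝ᵥ star v = n) (hw : w ⬝ᵥ star w = n) :
    trace (centeredProj v * centeredProj w) = (v ⬝ᵥ star w) * (w ⬝ᵥ star v) - n := by
  simp only [centeredProj, sub_mul, mul_sub, Matrix.mul_one, Matrix.one_mul, trace_sub,
    vecMulVec_mul_vecMulVec, trace_vecMulVec, dotProduct_smul, trace_one, Fintype.card_fin,
    hv, hw, smul_eq_mul, dotProduct_comm (star v) w]
  ring

lemma dotProduct_star_mul_eq_norm_sq (v w : Fin n → ℂ) :
    (v ⬝ᵥ star w) * (w ⬝ᵥ star v) = ((‖v ⬝ᵥ star w‖ ^ 2 : ℝ) : ℂ) := by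
  rw [← star_star w, star_dotProduct, star_star, star_star]
  simp [Complex.mul_conj']

lemma trace_centeredProj_row_mul {B : Fin M → Matrix (Fin n) (Fin n) ℂ}
    (hB : ∀ s, B s * (B s)ᴴ = (n : ℂ) • 1)
    (hU : ∀ s t, s ≠ t → ∀ a b, ‖(B s * (B t)ᴴ) a b‖ ^ 2 = n) (s t : Fin M) (a b : Fin n) :
    trace (centeredProj (B s a) * centeredProj (B t b)) =
      if s = t then (if a = b then (n : ℂ) ^ 2 else 0) - n else 0 := by
  have hrow s := dotProduct_star_rows_eq (hB s)
  rw [trace_centeredProj_mul (by simpa using hrow s a a) (by simpa using hrow t b b)]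
  by_cases hst : s = t
  · subst hst
    rw [hrow, hrow]
    by_cases hab : a = b
    · simp [hab, sq]
    · simp [hab, Ne.symm hab]
  · rw [dotProduct_star_mul_eq_norm_sq, ← mul_conjTranspose_apply, hU s t hst, if_neg hst]
    simp

/-- The last row is left out: the `centeredProj` of all `n` rows of one matrix sum to zero. -/
lemma linearIndependent_centeredProj_row {k : ℕ}
    {B : Fin M → Matrix (Fin (k + 1)) (Fin (k + 1)) ℂ}
    (hB : ∀ s, B s * (B s)ᴴ = ((k + 1 : ℕ) : ℂ) • 1)
    (hU : ∀ s t, s ≠ t → ∀ a b, ‖(B s * (B t)ᴴ) a b‖ ^ 2 = (k + 1 : ℕ)) :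
    LinearIndependent ℂ (fun p : Fin M × Fin k => centeredProj (B p.1 p.2.castSucc)) := by
  rw [Fintype.linearIndependent_iff]
  intro g hg
  have hk : (k : ℂ) + 1 ≠ 0 := by exact_mod_cast k.succ_ne_zero
  have key : ∀ s c, ((k : ℂ) + 1) * g (s, c) = ∑ b, g (s, b) := by
    intro s c
    have := congrArg (fun X => trace (X * centeredProj (B s c.castSucc))) hg
    simp only [Finset.sum_mul, trace_sum, Matrix.smul_mul, trace_smul, Matrix.zero_mul, trace_zero,
      trace_centeredProj_row_mul hB hU, Fintype.sum_prod_type, smul_eq_mul, Fin.castSucc_inj,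
      mul_ite, mul_zero, mul_sub] at this
    rw [Finset.sum_eq_single s (fun t _ hts => by simp [hts]) (by simp)] at this
    simp only [if_true, Finset.sum_sub_distrib, Finset.sum_ite_eq', Finset.mem_univ,
      ← Finset.sum_mul] at this
    push_cast at this
    apply mul_left_cancel₀ hk
    linear_combination this
  rintro ⟨s, c⟩
  have hsum : ∑ b, g (s, b) = 0 := by
    have := Finset.sum_congr rfl fun c (_ : c ∈ Finset.univ) => key s c
    rw [← Finset.mul_sum, Finset.sum_const, Finset.card_univ, Fintype.card_fin,
      nsmul_eq_mul] at this
    linear_combination this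
  have hsc := key s c
  rw [hsum] at hsc
  exact (mul_eq_zero.mp hsc).resolve_left hk

theorem card_le_of_pairwise_unbiased (hn : 2 ≤ n) {B : Fin M → Matrix (Fin n) (Fin n) ℂ}
    (hB : ∀ s, B s * (B s)ᴴ = (n : ℂ) • 1)
    (hU : ∀ s t, s ≠ t → ∀ a b, ‖(B s * (B t)ᴴ) a b‖ ^ 2 = n) : M ≤ n + 1 := by
  obtain ⟨k, rfl⟩ : ∃ k, n = k + 1 := ⟨n - 1, by omega⟩
  set traceless := LinearMap.ker (traceLinearMap (Fin (k + 1)) ℂ ℂ)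
  have hspan : Submodule.span ℂ
      (Set.range fun p : Fin M × Fin k => centeredProj (B p.1 p.2.castSucc)) ≤ traceless := by
    rw [Submodule.span_le]
    rintro _ ⟨p, rfl⟩
    simp [traceless, trace_centeredProj, dotProduct_star_rows_eq (hB p.1)]
  have hproper : traceless ≠ ⊤ := by
    refine fun h => absurd (h ▸ Submodule.mem_top : (1 : Matrix _ _ ℂ) ∈ traceless) ?_
    simpa [traceless] using k.cast_add_one_ne_zero
  have hcard := linearIndependent_iff_card_le_finrank_span.mp
    (linearIndependent_centeredProj_row hB hU)
  have hdim := (Submodule.finrank_mono hspan).trans_lt (Submodule.finrank_lt hproper)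
  simp only [Fintype.card_prod, Fintype.card_fin, Module.finrank_matrix, Module.finrank_self,
    mul_one] at hcard hdim
  have : M * k < (k + 1) * (k + 1) := hcard.trans_lt hdim
  nlinarith

theorem card_le_of_pairwise_unbiased_isUnitWeighing (hn : 2 ≤ n)
    {W : Fin M → Matrix (Fin n) (Fin n) ℂ} (hW : ∀ i, IsUnitWeighing n (W i))
    (hU : ∀ i j, i ≠ j → Unbiased n (W i) (W j)) : M ≤ n := by
  set c : ℂ := (Real.sqrt n : ℂ)
  have hc : ‖c‖ ^ 2 = n := by
    rw [Complex.norm_real, Real.norm_of_nonneg (Real.sqrt_nonneg _),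
      Real.sq_sqrt (Nat.cast_nonneg _)]
  have hcc : starRingEnd ℂ c * c = n := by
    rw [mul_comm, Complex.mul_conj', ← Complex.ofReal_pow, hc, Complex.ofReal_natCast]
  suffices M + 1 ≤ n + 1 by omega
  refine card_le_of_pairwise_unbiased hn (B := Fin.cons (c • 1) W) ?_ ?_
  · refine Fin.cases ?_ fun i => (hW i).2
    simp [smul_smul, hcc]
  · intro s t hst a b
    cases s using Fin.cases <;> cases t using Fin.cases
    · exact absurd rfl hst
    · simp [(hW _).norm_apply_eq_one, hc]
    · simp [(hW _).norm_apply_eq_one, hc]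
    · exact (hU _ _ (fun h => hst (congrArg _ h))).norm_sq_apply a b

end MutuallyUnbiased

section QuadraticPhase

variable {F : Type*} [Field F] [Fintype F] {ψ : AddChar F ℂ}

lemma norm_sq_sum_addChar_quadratic [DecidableEq F] (hψ : ψ.IsPrimitive) (hF : ringChar F ≠ 2)
    {u : F} (hu : u ≠ 0) (v : F) : ‖∑ x, ψ (u * x ^ 2 + v * x)‖ ^ 2 = Fintype.card F := by
  set f : F → F := fun x => u * x ^ 2 + v * x
  have h2u : ∀ h : F, 2 * u * h = 0 ↔ h = 0 := fun h => by
    simp [Ring.two_ne_zero hF, hu]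
  suffices (∑ x, ψ (f x)) * starRingEnd ℂ (∑ x, ψ (f x)) = Fintype.card F by
    rw [Complex.mul_conj', ← Complex.ofReal_pow] at this
    exact_mod_cast this
  calc (∑ x, ψ (f x)) * starRingEnd ℂ (∑ x, ψ (f x))
      = ∑ y, ∑ x, ψ (f x - f y) := by
        rw [map_sum, Finset.sum_mul_sum, Finset.sum_comm]
        simp only [← AddChar.map_neg_eq_conj, ← AddChar.map_add_eq_mul, sub_eq_add_neg]
    _ = ∑ y, ∑ h, ψ (f (y + h) - f y) := by
        refine Finset.sum_congr rfl fun y _ => ?_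
        exact (Fintype.sum_equiv (Equiv.addLeft y) _ _ fun _ => rfl).symm
    _ = ∑ h, ψ (f h) * ∑ y, ψ (y * (2 * u * h)) := by
        rw [Finset.sum_comm]
        refine Finset.sum_congr rfl fun h _ => ?_
        rw [Finset.mul_sum]
        refine Finset.sum_congr rfl fun y _ => ?_
        rw [← AddChar.map_add_eq_mul]
        congr 1
        ring
    _ = Fintype.card F := by
        simp [AddChar.sum_mulShift _ hψ, h2u, f]

variable (ψ) in
def quadraticPhase (t : F) : Matrix F F ℂ := of fun i j => ψ (t * j ^ 2 + i * j)

lemma quadraticPhase_mul_conjTranspose_apply (s t a b : F) :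
    (quadraticPhase ψ s * (quadraticPhase ψ t)ᴴ) a b =
      ∑ j, ψ ((s - t) * j ^ 2 + (a - b) * j) := by
  simp only [mul_apply, conjTranspose_apply, quadraticPhase, of_apply, RCLike.star_def,
    ← AddChar.map_neg_eq_conj, ← AddChar.map_add_eq_mul]
  exact Finset.sum_congr rfl fun j _ => congrArg ψ (by ring)

lemma quadraticPhase_mul_conjTranspose_self [DecidableEq F] (hψ : ψ.IsPrimitive) (t : F) :
    quadraticPhase ψ t * (quadraticPhase ψ t)ᴴ = (Fintype.card F : ℂ) • 1 := by
  ext a b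
  simp [quadraticPhase_mul_conjTranspose_apply, mul_comm _ (_ : F), AddChar.sum_mulShift _ hψ,
    one_apply, sub_eq_zero]

lemma norm_sq_quadraticPhase_mul_conjTranspose_apply [DecidableEq F] (hψ : ψ.IsPrimitive)
    (hF : ringChar F ≠ 2) {s t : F} (hst : s ≠ t) (a b : F) :
    ‖(quadraticPhase ψ s * (quadraticPhase ψ t)ᴴ) a b‖ ^ 2 = Fintype.card F := by
  rw [quadraticPhase_mul_conjTranspose_apply]
  exact norm_sq_sum_addChar_quadratic hψ hF (sub_ne_zero.mpr hst) _

end QuadraticPhase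

theorem stmt_10 :
    (∀ (m : ℕ) (W : Fin m → Matrix (Fin 3) (Fin 3) ℂ),
      (∀ i, IsUnitWeighing 3 (W i)) →
      (∀ i j, i ≠ j → Unbiased 3 (W i) (W j)) → m ≤ 3) ∧
    (∃ H : Fin 3 → Matrix (Fin 3) (Fin 3) ℂ,
      (∀ t i j, (H t) i j ^ 3 = 1) ∧
      (∀ t, IsUnitWeighing 3 (H t)) ∧
      (∀ s t, s ≠ t → Unbiased 3 (H s) (H t))) := by
  refine ⟨fun m W => card_le_of_pairwise_unbiased_isUnitWeighing (by norm_num), ?_⟩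
  set ψ : AddChar (ZMod 3) ℂ := ZMod.stdAddChar
  have hψ : ψ.IsPrimitive := ZMod.isPrimitive_stdAddChar 3
  have hF : ringChar (ZMod 3) ≠ 2 := by rw [ZMod.ringChar_zmod_n]; norm_num
  have hH t : quadraticPhase ψ t * (quadraticPhase ψ t)ᴴ = ((3 : ℕ) : ℂ) • 1 :=
    quadraticPhase_mul_conjTranspose_self hψ t
  have hcube (x : ZMod 3) : ψ x ^ 3 = 1 := by
    rw [← AddChar.map_nsmul_eq_pow, nsmul_eq_mul, ZMod.natCast_self, zero_mul,
      AddChar.map_zero_eq_one]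
  -- `ZMod 3` is definitionally `Fin 3`, so these matrices have the required type.
  refine ⟨quadraticPhase (F := ZMod 3) ψ, fun t i j => hcube _, fun t => ?_, fun s t hst => ?_⟩
  · exact ⟨fun i j => Or.inr (AddChar.norm_apply ψ _), hH t⟩
  · exact unbiased_of_norm_sq_apply (hH s) (hH t)
      (norm_sq_quadraticPhase_mul_conjTranspose_apply hψ hF hst)
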